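/- arXiv:1505.02331 — 9 statements merged into one kernel-verified Lean document; each statement's English description precedes it below -/
import Mathlib

section
/- Let A be a type. The colimit in the category of types of the functor (Finˢ)ᵒᵖ ⥤ Type given on objects by I ↦ (I → A), and sending (the opposite of) a surjection α : I ↠ J of Finˢ to the precomposition map (J → A) → (I → A), g ↦ g ∘ α, is canonically bijective to the set of finite nonempty subsets of A; the bijection is induced by sending a function f : I → A to its image f(I). -/
open CategoryTheory Limits Opposite

/-- A skeleton of the category `Finˢ` of finite nonempty types with surjective maps:
objects are positive natural numbers `n` (standing for `Fin n`), morphisms are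
surjections. -/
structure FinSurj : Type where
  n : ℕ
  pos : 0 < n

instance : Category FinSurj where
  Hom a b := { f : Fin a.n → Fin b.n // Function.Surjective f }
  id a := ⟨id, Function.surjective_id⟩
  comp f g := ⟨g.1 ∘ f.1, g.2.comp f.2⟩
  id_comp f := Subtype.ext rfl
  comp_id f := Subtype.ext rfl
  assoc f g h := Subtype.ext rfl

/-- The functor `(Finˢ)ᵒᵖ ⥤ Type` given on objects by `I ↦ (I → A)` and sending (the
opposite of) a surjection `α` to precomposition with `α`. -/
def finSurjPow (A : Type) : FinSurjᵒᵖ ⥤ Type where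
  obj I := Fin I.unop.n → A
  map f := TypeCat.ofHom fun g => g ∘ f.unop.1
  map_id := by intros; rfl
  map_comp := by intros; rfl

/-!
A point of the colimit is represented by some `f : I → A`, and any `f` is identified with
an enumeration of its image, through which it factors by a surjection. Hence two
representatives with the same image are identified, and `f ↦ range f` is a bijection.
-/

noncomputable section

namespace FinSurj

instance (I : FinSurj) : NeZero I.n := ⟨I.pos.ne'⟩

def ofSet {A : Type} (s : Set A) [Finite s] [Nonempty s] : FinSurj := ⟨Nat.card s, Nat.card_pos⟩

end FinSurj

namespace finSurjPow

variable {A : Type}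

def enum (s : Set A) [Finite s] [Nonempty s] : Fin (FinSurj.ofSet s).n → A :=
  Subtype.val ∘ (Finite.equivFin s).symm

theorem range_enum (s : Set A) [Finite s] [Nonempty s] : Set.range (enum s) = s :=
  ((Finite.equivFin s).symm.surjective.range_comp _).trans Subtype.range_coe

theorem ι_eq_ι_of_comp_eq {I J : FinSurj} (α : Fin I.n → Fin J.n) (hα : α.Surjective)
    (f : Fin I.n → A) (g : Fin J.n → A) (h : g ∘ α = f) :
    colimit.ι (finSurjPow A) (op I) f = colimit.ι (finSurjPow A) (op J) g := by
  subst h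
  exact colimit.w_apply (finSurjPow A) (Quiver.Hom.op (⟨α, hα⟩ : I ⟶ J)) g

theorem ι_eq_ι_enum {I : FinSurj} (f : Fin I.n → A) (s : Set A) [Finite s] [Nonempty s]
    (hs : Set.range f = s) :
    colimit.ι (finSurjPow A) (op I) f =
      colimit.ι (finSurjPow A) (op (FinSurj.ofSet s)) (enum s) := by
  subst hs
  refine ι_eq_ι_of_comp_eq (Finite.equivFin _ ∘ Set.rangeFactorization f)
    ((Finite.equivFin _).surjective.comp Set.rangeFactorization_surjective) _ _ ?_
  funext i
  exact congrArg Subtype.val ((Finite.equivFin _).symm_apply_apply (Set.rangeFactorization f i))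

theorem ι_eq_ι_of_range_eq {I J : FinSurj} (f : Fin I.n → A) (g : Fin J.n → A)
    (h : Set.range f = Set.range g) :
    colimit.ι (finSurjPow A) (op I) f = colimit.ι (finSurjPow A) (op J) g := by
  rw [ι_eq_ι_enum f _ rfl, ι_eq_ι_enum g _ h.symm]

variable (A) in
def rangeCocone : Cocone (finSurjPow A) where
  pt := { s : Set A // s.Finite ∧ s.Nonempty }
  ι :=
    { app := fun I => TypeCat.ofHom fun f => ⟨Set.range f, Set.finite_range f, Set.range_nonempty f⟩
      naturality := fun _ _ φ => by
        ext g
        exact Subtype.ext (φ.unop.2.range_comp g) }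

theorem desc_rangeCocone_ι (I : FinSurj) (f : Fin I.n → A) :
    (colimit.desc (finSurjPow A) (rangeCocone A) (colimit.ι (finSurjPow A) (op I) f)).1 =
      Set.range f :=
  congrArg Subtype.val (colimit.ι_desc_apply (rangeCocone A) (op I) f)

theorem bijective_desc_rangeCocone :
    Function.Bijective (colimit.desc (finSurjPow A) (rangeCocone A)) := by
  constructor
  · intro x y hxy
    obtain ⟨I, f, rfl⟩ := Types.jointly_surjective' x
    obtain ⟨J, g, rfl⟩ := Types.jointly_surjective' y
    have hrange := congrArg Subtype.val hxy
    rw [desc_rangeCocone_ι I.unop f, desc_rangeCocone_ι J.unop g] at hrange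
    exact ι_eq_ι_of_range_eq f g hrange
  · rintro ⟨s, hfin, hne⟩
    have : Finite s := hfin
    have : Nonempty s := hne.to_subtype
    exact ⟨_, Subtype.ext ((desc_rangeCocone_ι _ (enum s)).trans (range_enum s))⟩

end finSurjPow

/-- The colimit over `(Finˢ)ᵒᵖ` of the powers `I ↦ (I → A)` is canonically bijective to
the set of finite nonempty subsets of `A`, via `f ↦ image of f`. -/
theorem stmt0 (A : Type) :
    ∃ e : colimit (finSurjPow A) ≃ { s : Set A // s.Finite ∧ s.Nonempty },
      ∀ (I : FinSurj) (f : Fin I.n → A),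
        (e (colimit.ι (finSurjPow A) (op I) f)).1 = Set.range f :=
  ⟨Equiv.ofBijective _ finSurjPow.bijective_desc_rangeCocone, finSurjPow.desc_rangeCocone_ι⟩

end
end

section
/- Let D be a category, G : D ⥤ Cat a functor, and P : Grothendieck G ⥤ D the projection functor of the Grothendieck construction. Then the factorization category Factor_P(α) is connected for every morphism α of D if and only if the category G(d) is connected for every object d of D. -/
open CategoryTheory

universe v₂ u₂ v u

variable {C : Type u₁} [Category.{v₁} C] {D : Type u₂'} [Category.{v₂'} D]

/-- The factorization category `Factor_F(α)` of a morphism `α : d ⟶ d'` of `D` through a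
functor `F : C ⥤ D`: objects are triples `(c, u, v)` with `u ≫ v = α`. -/
structure Factor (F : C ⥤ D) {d d' : D} (α : d ⟶ d') where
  c : C
  u : d ⟶ F.obj c
  v : F.obj c ⟶ d'
  fac : u ≫ v = α

instance Factor.category (F : C ⥤ D) {d d' : D} (α : d ⟶ d') : Category (Factor F α) where
  Hom X Y := { φ : X.c ⟶ Y.c // X.u ≫ F.map φ = Y.u ∧ F.map φ ≫ Y.v = X.v }
  id X := ⟨𝟙 X.c, by simp, by simp⟩
  comp {X Y Z} f g := ⟨f.1 ≫ g.1,
    by rw [Functor.map_comp, ← Category.assoc, f.2.1, g.2.1],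
    by rw [Functor.map_comp, Category.assoc, g.2.2, f.2.2]⟩
  id_comp f := Subtype.ext (Category.id_comp f.1)
  comp_id f := Subtype.ext (Category.comp_id f.1)
  assoc f g h := Subtype.ext (Category.assoc f.1 g.1 h.1)

/-! A factorization `(⟨b, x⟩, u, v)` of `α : d ⟶ d'` through `P` is sent to `(G v) x` in `G(d')`,
and `x : G(d')` to the factorization `(⟨d', x⟩, α, 𝟙 d')`. Both assignments carry morphisms to
morphisms, every factorization `X` maps to the round trip of `X` by the morphism `(v, 𝟙)`, and the
round trip of `x` is `(G (𝟙 d')) x = x`, so zigzags transfer in both directions. -/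

lemma CategoryTheory.IsConnected.of_prefunctor_of_forall_zigzag {J K : Type*} [Category J]
    [Category K] [IsConnected J] (F : J ⥤q K) (s : K → J) (h : ∀ k, Zigzag k (F.obj (s k))) :
    IsConnected K :=
  have : Nonempty K := ⟨F.obj (Classical.arbitrary J)⟩
  zigzag_isConnected fun k l =>
    (h k).trans ((zigzag_prefunctor_obj_of_zigzag F (isPreconnected_zigzag _ _)).trans (h l).symm)

namespace Factor

variable (G : D ⥤ Cat.{v₂, u₂}) {d d' : D} (α : d ⟶ d')

lemma map_obj_eq_of_comp_eq {b b' : D} {f : b ⟶ b'} {v' : b' ⟶ d'} {v : b ⟶ d'}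
    (h : f ≫ v' = v) (x : G.obj b) :
    (G.map v).toFunctor.obj x = (G.map v').toFunctor.obj ((G.map f).toFunctor.obj x) := by
  subst h; simp

def ofFiber : G.obj d' ⥤q Factor (Grothendieck.forget G) α where
  obj x := ⟨⟨d', x⟩, α, 𝟙 d', Category.comp_id α⟩
  map f := ⟨(Grothendieck.ι G d').map f, Category.comp_id α, Category.comp_id _⟩

def toFiber : Factor (Grothendieck.forget G) α ⥤q G.obj d' where
  obj X := (G.map X.v).toFunctor.obj X.c.fiber
  map {_ Y} φ := eqToHom (map_obj_eq_of_comp_eq G φ.2.2 _) ≫ (G.map Y.v).toFunctor.map φ.1.fiber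

lemma zigzag_ofFiber_obj_toFiber_obj (X : Factor (Grothendieck.forget G) α) :
    Zigzag X ((ofFiber G α).obj ((toFiber G α).obj X)) :=
  Zigzag.of_hom ⟨⟨X.v, 𝟙 _⟩, X.fac, Category.comp_id _⟩

lemma zigzag_toFiber_obj_ofFiber_obj (x : G.obj d') :
    Zigzag x ((toFiber G α).obj ((ofFiber G α).obj x)) :=
  Zigzag.of_inv (eqToHom (show (G.map (𝟙 d')).toFunctor.obj x = x by simp))

theorem isConnected_forget_iff :
    IsConnected (Factor (Grothendieck.forget G) α) ↔ IsConnected (G.obj d') :=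
  ⟨fun _ => .of_prefunctor_of_forall_zigzag (toFiber G α) (ofFiber G α).obj
      (zigzag_toFiber_obj_ofFiber_obj G α),
    fun _ => .of_prefunctor_of_forall_zigzag (ofFiber G α) (toFiber G α).obj
      (zigzag_ofFiber_obj_toFiber_obj G α)⟩

end Factor

/-- For the projection `P : Grothendieck G ⥤ D` of the Grothendieck construction of
`G : D ⥤ Cat`, all the factorization categories `Factor_P(α)` are connected if and only
if all the fibers `G(d)` are connected categories. -/
theorem stmt2 {D : Type u} [Category.{v} D] (G : D ⥤ Cat.{v₂, u₂}) :
    (∀ {d d' : D} (α : d ⟶ d'), IsConnected (Factor (Grothendieck.forget G) α)) ↔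
      ∀ d : D, IsConnected (G.obj d) :=
  ⟨fun h d => (Factor.isConnected_forget_iff G (𝟙 d)).1 (h _),
    fun h _ _ α => (Factor.isConnected_forget_iff G α).2 (h _)⟩
end

section
/- Let A be a type. Let A^Fin denote the category whose objects are pairs (I, f) of a finite nonempty type I and a function f : I → A, a morphism (I₁, f₁) ⟶ (I₂, f₂) being a function α : I₁ → I₂ with f₂ ∘ α = f₁. Let W be the class of morphisms α of A^Fin that are surjective. Then the functor Q : A^Fin ⥤ Sub_f(A) sending (I, f) to the image of f (and a morphism to the induced inclusion of images) inverts W and exhibits Sub_f(A) as the localization of A^Fin at W: for every category E, precomposition with Q is an equivalence from functors Sub_f(A) ⥤ E onto the full subcategory of functors A^Fin ⥤ E sending every morphism of W to an isomorphism (CategoryTheory.Functor.IsLocalization). -/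
open CategoryTheory

universe u

/-- The category `A^Fin`: objects are pairs `(I, f)` of a finite nonempty type `I` and a
function `f : I → A`; morphisms `(I₁, f₁) ⟶ (I₂, f₂)` are functions `α : I₁ → I₂` with
`f₂ ∘ α = f₁`. -/
structure PowFin (A : Type u) : Type (u + 1) where
  I : Type u
  [fin : Fintype I]
  [ne : Nonempty I]
  f : I → A

attribute [instance] PowFin.fin PowFin.ne

instance (A : Type u) : Category.{u} (PowFin A) where
  Hom X Y := { α : X.I → Y.I // Y.f ∘ α = X.f }
  id X := ⟨id, Function.comp_id X.f⟩
  comp {X Y Z} α β := ⟨β.1 ∘ α.1, by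
    funext x
    have h1 := congrFun β.2 (α.1 x)
    have h2 := congrFun α.2 x
    simp only [Function.comp_apply] at h1 h2 ⊢
    rw [h1, h2]⟩
  id_comp f := Subtype.ext rfl
  comp_id f := Subtype.ext rfl
  assoc f g h := Subtype.ext rfl

/-- The poset of finite nonempty subsets of `A`, viewed as a category. -/
abbrev SubF (A : Type u) := { s : Set A // s.Finite ∧ s.Nonempty }

/-- The functor `A^Fin ⥤ Sub_f(A)` sending `(I, f)` to the image of `f`. -/
def ranQ (A : Type u) : PowFin A ⥤ SubF A where
  obj X := ⟨Set.range X.f, Set.finite_range X.f, Set.range_nonempty X.f⟩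
  map {X Y} α := homOfLE (by
    rintro a ⟨x, rfl⟩
    exact ⟨α.1 x, congrFun α.2 x⟩)
  map_id X := rfl
  map_comp f g := rfl

/-- The class of surjective morphisms of `A^Fin`. -/
def surjW (A : Type u) : MorphismProperty (PowFin A) :=
  fun _ _ α => Function.Surjective α.1


noncomputable section RanAux

/-- The inclusion functor `Sub_f(A) ⥤ A^Fin`. -/
def ranR (A : Type u) : SubF A ⥤ PowFin A where
  obj s := { I := s.1, fin := s.2.1.fintype, ne := s.2.2.to_subtype, f := Subtype.val }
  map {s t} h := ⟨fun x => ⟨x.1, leOfHom h x.2⟩, rfl⟩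
  map_id s := Subtype.ext rfl
  map_comp f g := Subtype.ext rfl

lemma subF_hom_subsingleton {A : Type u} (s t : SubF A) : Subsingleton (s ⟶ t) := by
  constructor
  rintro ⟨⟨a⟩⟩ ⟨⟨b⟩⟩
  rfl

lemma isIso_of_le {A : Type u} {s t : SubF A} (f : s ⟶ t) (h : t ≤ s) : IsIso f := by
  have := subF_hom_subsingleton s t
  have := subF_hom_subsingleton t s
  have := subF_hom_subsingleton s s
  have := subF_hom_subsingleton t t
  exact ⟨homOfLE h, Subsingleton.elim _ _, Subsingleton.elim _ _⟩

/-- The adjunction `ranQ ⊣ ranR`. -/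
def ranAdj (A : Type u) : ranQ A ⊣ ranR A where
  unit :=
    { app := fun X => ⟨fun x => ⟨X.f x, ⟨x, rfl⟩⟩, rfl⟩
      naturality := fun X Y α => by
        apply Subtype.ext
        funext x
        apply Subtype.ext
        exact congrFun α.2 x }
  counit :=
    { app := fun s => homOfLE (by
        rintro a ⟨x, rfl⟩
        exact x.2)
      naturality := fun s t h => by
        have := subF_hom_subsingleton ((ranR A ⋙ ranQ A).obj s) t
        exact Subsingleton.elim _ _ }
  left_triangle_components X := by
    have := subF_hom_subsingleton ((ranQ A).obj X) ((ranQ A).obj X)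
    exact Subsingleton.elim _ _
  right_triangle_components s := by
    apply Subtype.ext
    funext x
    apply Subtype.ext
    rfl

lemma ranAdj_unit_mem (A : Type u) (X : PowFin A) : surjW A ((ranAdj A).unit.app X) := by
  rintro ⟨a, x, rfl⟩
  exact ⟨x, rfl⟩

lemma surjW_isInvertedBy (A : Type u) : (surjW A).IsInvertedBy (ranQ A) := by
  intro X Y α hα
  refine isIso_of_le _ ?_
  rintro a ⟨y, rfl⟩
  obtain ⟨x, rfl⟩ := hα y
  exact ⟨x, (congrFun α.2 x).symm⟩

end RanAux

/-- The image functor `A^Fin ⥤ Sub_f(A)` exhibits the poset of finite nonempty subsets of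
`A` as the localization of `A^Fin` at the class of surjective morphisms. -/
theorem stmt3 (A : Type u) : (ranQ A).IsLocalization (surjW A) := by
  let W := surjW A
  have hG : W.IsInvertedBy (ranQ A) := surjW_isInvertedBy A
  have : ∀ (X : PowFin A), IsIso ((Functor.whiskerRight (ranAdj A).unit W.Q).app X) := fun X =>
    Localization.inverts W.Q W _ (ranAdj_unit_mem A X)
  have : IsIso (Functor.whiskerRight (ranAdj A).unit W.Q) := NatIso.isIso_of_isIso_app _
  have hc : ∀ (s : SubF A), IsIso ((ranAdj A).counit.app s) := fun s =>
    isIso_of_le _ (by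
      intro a ha
      exact ⟨⟨a, ha⟩, rfl⟩)
  have : IsIso (ranAdj A).counit := NatIso.isIso_of_isIso_app _
  let e : W.Localization ≌ SubF A :=
    CategoryTheory.Equivalence.mk (Localization.lift (ranQ A) hG W.Q) (ranR A ⋙ W.Q)
      (Localization.liftNatIso W.Q W W.Q (ranQ A ⋙ ranR A ⋙ W.Q) _ _
        (W.Q.leftUnitor.symm ≪≫ asIso (Functor.whiskerRight (ranAdj A).unit W.Q)))
      (Functor.associator _ _ _ ≪≫
        Functor.isoWhiskerLeft _ (Localization.fac (ranQ A) hG W.Q) ≪≫ asIso (ranAdj A).counit)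
  exact Functor.IsLocalization.of_equivalence_target W.Q W (ranQ A) e
    (Localization.fac (ranQ A) hG W.Q)
end

section
/- Let Λ be a ring, ι a finite nonempty type, and for every nonempty subset J ⊆ ι let M_J be a Λ-module. For every nonempty subset K ⊆ ι put N_K := ⊕_{J nonempty, J ∩ K = ∅} M_J, and for K ⊆ K′ let π_{K,K′} : N_K → N_{K′} be the projection that kills the summands M_J with J ∩ K′ ≠ ∅ and is the identity on the remaining summands. Let L be the limit of this diagram over the poset of nonempty subsets of ι, realized as the submodule of ∏_{∅≠K⊆ι} N_K consisting of families (x_K) with π_{K,K′}(x_K) = x_{K′} whenever K ⊆ K′. Then the canonical map p : ⊕_{∅≠J⊆ι} M_J → L, whose K-th component is the projection killing the summands M_J with J ∩ K ≠ ∅, is surjective and its kernel is exactly the canonical copy of the summand M_ι (the summand indexed by J = ι); in particular L ≅ ⊕_{∅≠J⊊ι, J≠∅} M_J. -/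
open Finset

/-- The projection `⊕_{∅ ≠ J ⊆ ι} M_J → N_K = ⊕_{J ≠ ∅, J ∩ K = ∅} M_J` (realized inside
the product `∏_J M_J`, which is the same as the direct sum since `ι` is finite): it kills
the coordinates `M_J` with `J = ∅` or `J ∩ K ≠ ∅` and is the identity on the others.
Applied to supported elements it also realizes the transition maps `π_{K,K'}`. -/
def projMap (Λ : Type) [Ring Λ] {ι : Type} [DecidableEq ι] (M : Finset ι → Type)
    [∀ J, AddCommGroup (M J)] [∀ J, Module Λ (M J)] (K : Finset ι) :
    (∀ J, M J) →ₗ[Λ] (∀ J, M J) where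
  toFun x J := if J.Nonempty ∧ J ∩ K = ∅ then x J else 0
  map_add' x y := by
    funext J
    by_cases h : J.Nonempty ∧ J ∩ K = ∅ <;> simp [h]
  map_smul' c x := by
    funext J
    by_cases h : J.Nonempty ∧ J ∩ K = ∅ <;> simp [h]

/-- The limit `L = lim_{∅ ≠ K ⊆ ι} N_K`, realized as the submodule of `∏_{∅ ≠ K} N_K`
(each `N_K` being realized as the supported part of `∏_J M_J`) of families `(x_K)` with
`π_{K,K'}(x_K) = x_{K'}` whenever `K ⊆ K'`. -/
def limSub (Λ : Type) [Ring Λ] {ι : Type} [DecidableEq ι] (M : Finset ι → Type)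
    [∀ J, AddCommGroup (M J)] [∀ J, Module Λ (M J)] :
    Submodule Λ (∀ _ : { K : Finset ι // K.Nonempty }, ∀ J, M J) where
  carrier := { x | (∀ K, projMap Λ M K.1 (x K) = x K) ∧
      ∀ K K' : { K : Finset ι // K.Nonempty }, K.1 ⊆ K'.1 →
        projMap Λ M K'.1 (x K) = x K' }
  add_mem' := by
    rintro x y ⟨hx1, hx2⟩ ⟨hy1, hy2⟩
    constructor
    · intro K
      simp only [Pi.add_apply, map_add, hx1 K, hy1 K]
    · intro K K' h
      simp only [Pi.add_apply, map_add, hx2 K K' h, hy2 K K' h]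
  zero_mem' := by
    constructor
    · intro K
      simp only [Pi.zero_apply, map_zero]
    · intro K K' _
      simp only [Pi.zero_apply, map_zero]
  smul_mem' := by
    rintro c x ⟨hx1, hx2⟩
    constructor
    · intro K
      simp only [Pi.smul_apply, map_smul, hx1 K]
    · intro K K' h
      simp only [Pi.smul_apply, map_smul, hx2 K K' h]

/-- The canonical map `p : ⊕_{∅ ≠ J ⊆ ι} M_J → ∏_{∅ ≠ K} N_K`, whose `K`-th component is
the projection killing the summands `M_J` with `J ∩ K ≠ ∅`. -/
def pMap (Λ : Type) [Ring Λ] {ι : Type} [DecidableEq ι] (M : Finset ι → Type)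
    [∀ J, AddCommGroup (M J)] [∀ J, Module Λ (M J)] :
    (∀ J, M J) →ₗ[Λ] (∀ _ : { K : Finset ι // K.Nonempty }, ∀ J, M J) :=
  LinearMap.pi fun K => projMap Λ M K.1


/-! A compatible family `(x_K)` is determined by its diagonal values `y_J := (x_{Jᶜ})_J` for
`∅ ≠ J ⊊ ι`: whenever `J ∩ K = ∅` we have `K ⊆ Jᶜ`, so compatibility forces
`(x_K)_J = (x_{Jᶜ})_J`. Conversely `M_ι` is invisible in every `N_K`, since `ι` meets every
nonempty `K`. Hence `p` restricted to the elements vanishing at `∅` and `ι` is inverse to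
`x ↦ y`. -/

section

variable (Λ : Type) [Ring Λ] {ι : Type} [DecidableEq ι]
  (M : Finset ι → Type) [∀ J, AddCommGroup (M J)] [∀ J, Module Λ (M J)]

lemma Finset.ne_univ_of_inter_eq_empty [Fintype ι] {J K : Finset ι} (hK : K.Nonempty)
    (h : J ∩ K = ∅) : J ≠ univ := by
  rintro rfl
  exact hK.ne_empty (by simpa using h)

lemma Finset.compl_nonempty_of_ne_univ [Fintype ι] {J : Finset ι} (h : J ≠ univ) :
    Jᶜ.Nonempty :=
  nonempty_iff_ne_empty.mpr ((compl_eq_empty_iff J).not.mpr h)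

lemma projMap_apply (K : Finset ι) (x : ∀ J, M J) (J : Finset ι) :
    projMap Λ M K x J = if J.Nonempty ∧ J ∩ K = ∅ then x J else 0 := rfl

lemma pMap_apply (y : ∀ J, M J) (K : { K : Finset ι // K.Nonempty }) (J : Finset ι) :
    pMap Λ M y K J = if J.Nonempty ∧ J ∩ K.1 = ∅ then y J else 0 := rfl

lemma pMap_apply_compl [Fintype ι] (y : ∀ J, M J) {J : Finset ι} (hJ : J.Nonempty)
    (hJ' : J ≠ univ) : pMap Λ M y ⟨Jᶜ, compl_nonempty_of_ne_univ hJ'⟩ J = y J :=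
  if_pos ⟨hJ, inter_compl J⟩

lemma pMap_mem_limSub (y : ∀ J, M J) : pMap Λ M y ∈ limSub Λ M := by
  constructor
  · intro K
    funext J
    by_cases h : J.Nonempty ∧ J ∩ K.1 = ∅ <;> simp [pMap_apply, projMap_apply, h]
  · intro K K' hKK'
    funext J
    by_cases h : J.Nonempty ∧ J ∩ K'.1 = ∅
    · have hK : J ∩ K.1 = ∅ := subset_empty.mp (h.2 ▸ inter_subset_inter_left hKK')
      simp [pMap_apply, projMap_apply, h, hK]
    · simp [pMap_apply, projMap_apply, h]

lemma apply_eq_zero_of_mem_limSub {x : ∀ _ : { K : Finset ι // K.Nonempty }, ∀ J, M J}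
    (hx : x ∈ limSub Λ M) (K : { K : Finset ι // K.Nonempty }) {J : Finset ι}
    (hJ : ¬(J.Nonempty ∧ J ∩ K.1 = ∅)) : x K J = 0 := by
  rw [← hx.1 K, projMap_apply, if_neg hJ]

lemma apply_eq_apply_compl_of_mem_limSub [Fintype ι]
    {x : ∀ _ : { K : Finset ι // K.Nonempty }, ∀ J, M J} (hx : x ∈ limSub Λ M)
    (K : { K : Finset ι // K.Nonempty }) {J : Finset ι} (hJ : J.Nonempty) (hJK : J ∩ K.1 = ∅) :
    x K J = x ⟨Jᶜ, compl_nonempty_of_ne_univ (ne_univ_of_inter_eq_empty K.2 hJK)⟩ J := by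
  have hKJ : K.1 ⊆ Jᶜ :=
    subset_compl_iff_disjoint_left.mpr (disjoint_iff_inter_eq_empty.mpr hJK)
  rw [← hx.2 K ⟨Jᶜ, _⟩ hKJ, projMap_apply, if_pos ⟨hJ, inter_compl J⟩]

variable [Fintype ι]

def limToSum : (∀ _ : { K : Finset ι // K.Nonempty }, ∀ J, M J) →ₗ[Λ] (∀ J, M J) where
  toFun x J := if h : J.Nonempty ∧ J ≠ univ then x ⟨Jᶜ, compl_nonempty_of_ne_univ h.2⟩ J else 0
  map_add' x y := by
    funext J
    by_cases h : J.Nonempty ∧ J ≠ univ <;> simp [h]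
  map_smul' c x := by
    funext J
    by_cases h : J.Nonempty ∧ J ≠ univ <;> simp [h]

lemma limToSum_apply (x : ∀ _ : { K : Finset ι // K.Nonempty }, ∀ J, M J) (J : Finset ι) :
    limToSum Λ M x J =
      if h : J.Nonempty ∧ J ≠ univ then x ⟨Jᶜ, compl_nonempty_of_ne_univ h.2⟩ J else 0 := rfl

lemma limToSum_apply_empty (x : ∀ _ : { K : Finset ι // K.Nonempty }, ∀ J, M J) :
    limToSum Λ M x ∅ = 0 :=
  (limToSum_apply Λ M x ∅).trans (dif_neg fun h => h.1.ne_empty rfl)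

lemma limToSum_apply_univ (x : ∀ _ : { K : Finset ι // K.Nonempty }, ∀ J, M J) :
    limToSum Λ M x univ = 0 :=
  (limToSum_apply Λ M x univ).trans (dif_neg fun h => h.2 rfl)

lemma pMap_limToSum {x : ∀ _ : { K : Finset ι // K.Nonempty }, ∀ J, M J}
    (hx : x ∈ limSub Λ M) : pMap Λ M (limToSum Λ M x) = x := by
  funext K J
  rw [pMap_apply]
  by_cases h : J.Nonempty ∧ J ∩ K.1 = ∅
  · rw [if_pos h, limToSum_apply, dif_pos ⟨h.1, ne_univ_of_inter_eq_empty K.2 h.2⟩,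
      apply_eq_apply_compl_of_mem_limSub Λ M hx K h.1 h.2]
  · rw [if_neg h, apply_eq_zero_of_mem_limSub Λ M hx K h]

lemma limToSum_pMap {y : ∀ J, M J} (h0 : y ∅ = 0) (hu : y univ = 0) :
    limToSum Λ M (pMap Λ M y) = y := by
  funext J
  rw [limToSum_apply]
  split_ifs with h
  · exact pMap_apply_compl Λ M y h.1 h.2
  · rcases not_and_or.mp h with hJ | hJ
    · rw [not_nonempty_iff_eq_empty.mp hJ, h0]
    · rw [not_not.mp hJ, hu]

lemma pMap_eq_zero_iff {y : ∀ J, M J} (h0 : y ∅ = 0) :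
    pMap Λ M y = 0 ↔ ∀ J : Finset ι, J ≠ univ → y J = 0 := by
  constructor
  · intro hy J hJ
    rcases J.eq_empty_or_nonempty with rfl | hJne
    · exact h0
    · rw [← pMap_apply_compl Λ M y hJne hJ, hy]
      rfl
  · intro hy
    funext K J
    rw [pMap_apply]
    split_ifs with h
    · exact hy J (ne_univ_of_inter_eq_empty K.2 h.2)
    · rfl

def limSubEquiv : limSub Λ M ≃ₗ[Λ]
    (LinearMap.ker (LinearMap.proj (R := Λ) (φ := M) (∅ : Finset ι)) ⊓
      LinearMap.ker (LinearMap.proj (R := Λ) (φ := M) univ) : Submodule Λ (∀ J, M J)) :=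
  LinearEquiv.ofLinearMap
    (LinearMap.codRestrict _ ((limToSum Λ M).comp (limSub Λ M).subtype)
      fun x => ⟨limToSum_apply_empty Λ M x.1, limToSum_apply_univ Λ M x.1⟩)
    (LinearMap.codRestrict (limSub Λ M) ((pMap Λ M).comp (Submodule.subtype _))
      fun y => pMap_mem_limSub Λ M y.1)
    (by ext y : 2; exact limToSum_pMap Λ M y.2.1 y.2.2)
    (by ext x : 2; exact pMap_limToSum Λ M x.2)

end

theorem stmt4_general (Λ : Type) [Ring Λ] (ι : Type) [Fintype ι] [DecidableEq ι]
    (M : Finset ι → Type) [∀ J, AddCommGroup (M J)] [∀ J, Module Λ (M J)] :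
    (∀ y : ∀ J, M J, y ∅ = 0 → pMap Λ M y ∈ limSub Λ M) ∧
    (∀ x ∈ limSub Λ M, ∃ y : ∀ J, M J, y ∅ = 0 ∧ pMap Λ M y = x) ∧
    (∀ y : ∀ J, M J, y ∅ = 0 →
      (pMap Λ M y = 0 ↔ ∀ J : Finset ι, J ≠ Finset.univ → y J = 0)) ∧
    Nonempty ((limSub Λ M) ≃ₗ[Λ]
      (LinearMap.ker (LinearMap.proj (R := Λ) (φ := M) (∅ : Finset ι)) ⊓
        LinearMap.ker (LinearMap.proj (R := Λ) (φ := M) Finset.univ) :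
          Submodule Λ (∀ J, M J))) :=
  ⟨fun y _ => pMap_mem_limSub Λ M y,
    fun _ hx => ⟨limToSum Λ M _, limToSum_apply_empty Λ M _, pMap_limToSum Λ M hx⟩,
    fun _ h0 => pMap_eq_zero_iff Λ M h0,
    ⟨limSubEquiv Λ M⟩⟩

/-- The direct sum `⊕_{∅ ≠ J ⊆ ι} M_J` is realized as the elements `y` of `∏_J M_J` with
`y ∅ = 0` (`ι` being finite).  The canonical map `p` lands in the limit `L`, is surjective
onto `L`, and its kernel is exactly the canonical copy of the summand `M_ι`
(the elements supported at `J = ι`); in particular `L` is isomorphic to the direct sum of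
the `M_J` over the proper nonempty subsets `J ⊊ ι`. -/
theorem stmt4 (Λ : Type) [Ring Λ] (ι : Type) [Fintype ι] [DecidableEq ι] [Nonempty ι]
    (M : Finset ι → Type) [∀ J, AddCommGroup (M J)] [∀ J, Module Λ (M J)] :
    (∀ y : ∀ J, M J, y ∅ = 0 → pMap Λ M y ∈ limSub Λ M) ∧
    (∀ x ∈ limSub Λ M, ∃ y : ∀ J, M J, y ∅ = 0 ∧ pMap Λ M y = x) ∧
    (∀ y : ∀ J, M J, y ∅ = 0 →
      (pMap Λ M y = 0 ↔ ∀ J : Finset ι, J ≠ Finset.univ → y J = 0)) ∧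
    Nonempty ((limSub Λ M) ≃ₗ[Λ]
      (LinearMap.ker (LinearMap.proj (R := Λ) (φ := M) (∅ : Finset ι)) ⊓
        LinearMap.ker (LinearMap.proj (R := Λ) (φ := M) Finset.univ) :
          Submodule Λ (∀ J, M J))) :=
  stmt4_general Λ ι M
end

section
/- Let A be a type and J a nonempty finite subset of A. Let C be the category whose objects are pairs (K, I) of finite subsets of A with K ⊆ I, J ⊆ I and K ∩ J nonempty, and with exactly one morphism (K₁, I₁) ⟶ (K₂, I₂) when K₁ ⊆ K₂ and I₁ ⊆ I₂ (and none otherwise). Then the functor from the poset of nonempty subsets of J (ordered by inclusion) to C sending K to (K, J) — i.e. the inclusion of the full subcategory of objects with I = J — is an initial functor. -/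
/-!
The functor `K ↦ (K, J)` is left adjoint to `(K, I) ↦ K ∩ J`: for `K ⊆ J` and `J ⊆ I`, we have
`K ⊆ K'` iff `K ⊆ K' ∩ J`. Left adjoints are initial, since each comma category
`CostructuredArrow F d` then has a terminal object.
-/

open CategoryTheory

variable {A : Type} [DecidableEq A]

/-- The poset `C` of pairs `(K, I)` of finite subsets of `A` with `K ⊆ I`, `J ⊆ I` and
`K ∩ J` nonempty; there is exactly one morphism `(K₁, I₁) ⟶ (K₂, I₂)` when `K₁ ⊆ K₂` and
`I₁ ⊆ I₂`. -/
abbrev AugPairs (J : Finset A) :=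
  { p : Finset A × Finset A // p.1 ⊆ p.2 ∧ J ⊆ p.2 ∧ (p.1 ∩ J).Nonempty }

/-- The inclusion of the poset of nonempty subsets of `J` into `C`, sending `K` to
`(K, J)`. -/
def inclFunctor (J : Finset A) :
    { K : Finset A // K.Nonempty ∧ K ⊆ J } ⥤ AugPairs J :=
  Monotone.functor
    (f := fun K => ⟨(K.1, J), K.2.2, Finset.Subset.refl J, by
      rw [Finset.inter_eq_left.mpr K.2.2]; exact K.2.1⟩) <| by
    intro K K' h
    exact ⟨h, le_refl J⟩

theorem CategoryTheory.Functor.initial_of_galoisConnection {X Y : Type*} [Preorder X] [Preorder Y]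
    (F : X ⥤ Y) {u : Y → X} (gc : GaloisConnection F.obj u) : F.Initial :=
  Functor.initial_of_adjunction gc.adjunction

def AugPairs.fstInter (J : Finset A) (p : AugPairs J) : { K : Finset A // K.Nonempty ∧ K ⊆ J } :=
  ⟨p.1.1 ∩ J, p.2.2.2, Finset.inter_subset_right⟩

theorem galoisConnection_inclFunctor_fstInter (J : Finset A) :
    GaloisConnection (inclFunctor J).obj (AugPairs.fstInter J) := fun K p =>
  ⟨fun h => Finset.subset_inter h.1 K.2.2,
   fun h => ⟨Finset.Subset.trans h Finset.inter_subset_left, p.2.2.1⟩⟩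

theorem stmt6_general (J : Finset A) : (inclFunctor J).Initial :=
  (inclFunctor J).initial_of_galoisConnection (galoisConnection_inclFunctor_fstInter J)

/-- The full subcategory of objects of the form `(K, J)` is initial in `C`. -/
theorem stmt6 (J : Finset A) (hJ : J.Nonempty) : (inclFunctor J).Initial :=
  stmt6_general J
end

section
/- Let A be a type and I, J finite nonempty types. Let 𝒞 be the category whose objects are triples (K, p, q) with K a finite nonempty type and p : I ↠ K, q : J ↠ K surjections, a morphism (K, p, q) ⟶ (K′, p′, q′) being a map r : K → K′ with r ∘ p = p′ and r ∘ q = q′ (such r is automatically surjective). Then the colimit in the category of types of the functor 𝒞ᵒᵖ ⥤ Type given on objects by (K, p, q) ↦ (K → A), with transition maps given by precomposition, is canonically bijective to the set of pairs (f : I → A, g : J → A) having equal images; the bijection is induced by sending h : K → A to (h ∘ p, h ∘ q). -/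
open CategoryTheory Limits Opposite

/-- The category `𝒞` of cospans of surjections `I ↠ K ↞ J` (with `K` realized as `Fin n`):
morphisms are maps `r : K → K'` commuting with the structure surjections. -/
structure SurjCospan (I J : Type) : Type where
  n : ℕ
  p : I → Fin n
  q : J → Fin n
  hp : Function.Surjective p
  hq : Function.Surjective q

instance (I J : Type) : Category (SurjCospan I J) where
  Hom X Y := { r : Fin X.n → Fin Y.n // r ∘ X.p = Y.p ∧ r ∘ X.q = Y.q }
  id X := ⟨id, rfl, rfl⟩
  comp {X Y Z} f g := ⟨g.1 ∘ f.1, by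
    refine ⟨funext fun i => ?_, funext fun j => ?_⟩
    · have h1 := congrFun f.2.1 i
      have h2 := congrFun g.2.1 i
      simp only [Function.comp_apply] at h1 h2 ⊢
      rw [h1, h2]
    · have h1 := congrFun f.2.2 j
      have h2 := congrFun g.2.2 j
      simp only [Function.comp_apply] at h1 h2 ⊢
      rw [h1, h2]⟩
  id_comp f := Subtype.ext rfl
  comp_id f := Subtype.ext rfl
  assoc f g h := Subtype.ext rfl

/-- The functor `𝒞ᵒᵖ ⥤ Type` given by `(K, p, q) ↦ (K → A)` with transition maps the
precompositions. -/
def cospanPow (A I J : Type) : (SurjCospan I J)ᵒᵖ ⥤ Type where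
  obj X := Fin X.unop.n → A
  map f := TypeCat.ofHom (fun h => h ∘ f.unop.1)
  map_id := by intros; rfl
  map_comp := by intros; rfl

/-!
The pairs `(h ∘ p, h ∘ q)` form a cocone, so the colimit maps to the pairs with equal images.
An inverse sends `(f, g)` to the inclusion `range f → A` on the cospan `I ↠ range f ↞ J`
(`range f = range g` is finite since `I` is). It is a left inverse because every `h` on a
cospan `(K, p, q)` factors as `K → range (h ∘ p) ↪ A`, and the first map is a morphism of cospans.
-/

namespace SurjCospan

variable {I J : Type}

theorem range_comp_p_eq_range_comp_q {A : Type} (X : SurjCospan I J) (h : Fin X.n → A) :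
    Set.range (h ∘ X.p) = Set.range (h ∘ X.q) :=
  (X.hp.range_comp h).trans (X.hq.range_comp h).symm

noncomputable def ofSurjective {K : Type} [Finite K] (p : I → K) (q : J → K)
    (hp : p.Surjective) (hq : q.Surjective) : SurjCospan I J where
  n := Nat.card K
  p := Finite.equivFin K ∘ p
  q := Finite.equivFin K ∘ q
  hp := (Finite.equivFin K).surjective.comp hp
  hq := (Finite.equivFin K).surjective.comp hq

noncomputable def homOfSurjective (X : SurjCospan I J) {K : Type} [Finite K] {p : I → K}
    {q : J → K} {hp : p.Surjective} {hq : q.Surjective} (r : Fin X.n → K) (hrp : r ∘ X.p = p)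
    (hrq : r ∘ X.q = q) : X ⟶ ofSurjective p q hp hq :=
  ⟨Finite.equivFin K ∘ r, congrArg (Finite.equivFin K ∘ ·) hrp,
    congrArg (Finite.equivFin K ∘ ·) hrq⟩

noncomputable def ofEqRange {A : Type} [Finite I] (f : I → A) (g : J → A)
    (hfg : Set.range f = Set.range g) : SurjCospan I J :=
  ofSurjective (Set.rangeFactorization f) (Equiv.setCongr hfg.symm ∘ Set.rangeFactorization g)
    Set.rangeFactorization_surjective
    ((Equiv.setCongr hfg.symm).surjective.comp Set.rangeFactorization_surjective)

end SurjCospan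

open SurjCospan

abbrev EqRangePairs (A I J : Type) : Type :=
  { fg : (I → A) × (J → A) // Set.range fg.1 = Set.range fg.2 }

def eqRangeCocone (A I J : Type) : Cocone (cospanPow A I J) where
  pt := EqRangePairs A I J
  ι :=
    { app X := TypeCat.ofHom fun h =>
        ⟨(h ∘ X.unop.p, h ∘ X.unop.q), X.unop.range_comp_p_eq_range_comp_q h⟩
      naturality X Y r := by
        ext h
        refine Subtype.ext (Prod.ext ?_ ?_)
        · exact congrArg (h ∘ ·) r.unop.2.1
        · exact congrArg (h ∘ ·) r.unop.2.2 }

section Colimit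

variable (A : Type) {I J : Type}

theorem colimit_ι_cospanPow_comp (X : SurjCospan I J) {K : Type} [Finite K] {p : I → K}
    {q : J → K} {hp : p.Surjective} {hq : q.Surjective} (r : Fin X.n → K) (hrp : r ∘ X.p = p)
    (hrq : r ∘ X.q = q) (u : K → A) :
    colimit.ι (cospanPow A I J) (op X) (u ∘ r) =
      colimit.ι (cospanPow A I J) (op (ofSurjective p q hp hq))
        (u ∘ (Finite.equivFin K).symm) := by
  refine (Types.colimit_sound (homOfSurjective X r hrp hrq).op ?_).symm
  change u ∘ (Finite.equivFin K).symm ∘ Finite.equivFin K ∘ r = u ∘ r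
  simp only [← Function.comp_assoc, Equiv.symm_comp_self, Function.id_comp]

variable [Finite I]

noncomputable def colimitOfEqRange (fg : EqRangePairs A I J) : colimit (cospanPow A I J) :=
  colimit.ι (cospanPow A I J) (op (ofEqRange fg.1.1 fg.1.2 fg.2))
    (Subtype.val ∘ (Finite.equivFin _).symm)

theorem colimitOfEqRange_mk (X : SurjCospan I J) (h : Fin X.n → A) :
    colimitOfEqRange A ⟨(h ∘ X.p, h ∘ X.q), X.range_comp_p_eq_range_comp_q h⟩ =
      colimit.ι (cospanPow A I J) (op X) h :=
  have hmem (k : Fin X.n) : h k ∈ Set.range (h ∘ X.p) := X.hp.range_comp h ▸ ⟨k, rfl⟩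
  (colimit_ι_cospanPow_comp A X (K := Set.range (h ∘ X.p)) (fun k => ⟨h k, hmem k⟩) rfl rfl
    Subtype.val).symm

theorem colimitOfEqRange_desc (x : colimit (cospanPow A I J)) :
    colimitOfEqRange A (colimit.desc _ (eqRangeCocone A I J) x) = x := by
  obtain ⟨⟨X⟩, h, rfl⟩ := Types.jointly_surjective' x
  rw [colimit.ι_desc_apply]
  exact colimitOfEqRange_mk A X h

theorem desc_colimitOfEqRange (fg : EqRangePairs A I J) :
    colimit.desc _ (eqRangeCocone A I J) (colimitOfEqRange A fg) = fg := by
  refine (colimit.ι_desc_apply _ _ _).trans (Subtype.ext (Prod.ext ?_ ?_)) <;>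
  · funext x
    exact congrArg Subtype.val ((Finite.equivFin _).symm_apply_apply _)

end Colimit

theorem stmt7_general (A I J : Type) [Fintype I] :
    ∃ e : colimit (cospanPow A I J) ≃
        { fg : (I → A) × (J → A) // Set.range fg.1 = Set.range fg.2 },
      ∀ (X : SurjCospan I J) (h : Fin X.n → A),
        (e (colimit.ι (cospanPow A I J) (op X) h)).1 = (h ∘ X.p, h ∘ X.q) :=
  ⟨⟨colimit.desc _ (eqRangeCocone A I J), colimitOfEqRange A, colimitOfEqRange_desc A,
      desc_colimitOfEqRange A⟩,
    fun X h => congrArg Subtype.val (colimit.ι_desc_apply (eqRangeCocone A I J) (op X) h)⟩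

/-- The colimit over `𝒞ᵒᵖ` of the powers `(K,p,q) ↦ (K → A)` is canonically bijective to
the set of pairs `(f : I → A, g : J → A)` with equal images, via `h ↦ (h ∘ p, h ∘ q)`. -/
theorem stmt7 (A I J : Type) [Fintype I] [Nonempty I] [Fintype J] [Nonempty J] :
    ∃ e : colimit (cospanPow A I J) ≃
        { fg : (I → A) × (J → A) // Set.range fg.1 = Set.range fg.2 },
      ∀ (X : SurjCospan I J) (h : Fin X.n → A),
        (e (colimit.ι (cospanPow A I J) (op X) h)).1 = (h ∘ X.p, h ∘ X.q) :=
  stmt7_general A I J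
end

section
/- Let A be a type and I, J finite nonempty types. Let 𝒟 be the category whose objects are triples (K, p, q) with K a finite nonempty type, p : I ↠ K a surjection and q : J → K an arbitrary map, a morphism (K, p, q) ⟶ (K′, p′, q′) being a map r : K → K′ with r ∘ p = p′ and r ∘ q = q′. Then the colimit in the category of types of the functor 𝒟ᵒᵖ ⥤ Type given on objects by (K, p, q) ↦ (K → A), with transition maps given by precomposition, is canonically bijective to the set of pairs (f : I → A, g : J → A) such that the image of g is contained in the image of f; the bijection is induced by sending h : K → A to (h ∘ p, h ∘ q). -/
/-!
Since `p` is surjective, `(h ∘ p, h ∘ q)` always has `range (h ∘ q) ⊆ range (h ∘ p)`, so these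
pairs form a cocone. Conversely a pair `(f, g)` is represented by the diagram
`I ↠ range f ← J` together with the inclusion `range f → A`; any representative `(X, h)`
maps to the diagram of its own pair by `k ↦ h k`, which identifies the two in the colimit.
Hence the induced map from the colimit is a bijection.
-/

open CategoryTheory Limits Opposite

structure SurjCospanHalf (I J : Type) : Type where
  n : ℕ
  p : I → Fin n
  q : J → Fin n
  hp : Function.Surjective p

instance (I J : Type) : Category (SurjCospanHalf I J) where
  Hom X Y := { r : Fin X.n → Fin Y.n // r ∘ X.p = Y.p ∧ r ∘ X.q = Y.q }
  id X := ⟨id, rfl, rfl⟩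
  comp {X Y Z} f g := ⟨g.1 ∘ f.1, by
    refine ⟨funext fun i => ?_, funext fun j => ?_⟩
    · have h1 := congrFun f.2.1 i
      have h2 := congrFun g.2.1 i
      simp only [Function.comp_apply] at h1 h2 ⊢
      rw [h1, h2]
    · have h1 := congrFun f.2.2 j
      have h2 := congrFun g.2.2 j
      simp only [Function.comp_apply] at h1 h2 ⊢
      rw [h1, h2]⟩
  id_comp f := Subtype.ext rfl
  comp_id f := Subtype.ext rfl
  assoc f g h := Subtype.ext rfl

def halfCospanPow (A I J : Type) : (SurjCospanHalf I J)ᵒᵖ ⥤ Type where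
  obj X := Fin X.unop.n → A
  map f := TypeCat.ofHom fun h => h ∘ f.unop.1
  map_id := by intros; rfl
  map_comp := by intros; rfl

namespace SurjCospanHalf

variable {A I J : Type}

lemma apply_mem_range_comp_p (X : SurjCospanHalf I J) (h : Fin X.n → A) (k : Fin X.n) :
    h k ∈ Set.range (h ∘ X.p) := by
  obtain ⟨i, rfl⟩ := X.hp k
  exact ⟨i, rfl⟩

lemma range_comp_q_subset (X : SurjCospanHalf I J) (h : Fin X.n → A) :
    Set.range (h ∘ X.q) ⊆ Set.range (h ∘ X.p) := by
  rintro _ ⟨j, rfl⟩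
  exact X.apply_mem_range_comp_p h (X.q j)

variable [Finite I]

noncomputable def ofRange (f : I → A) (g : J → A) (hfg : Set.range g ⊆ Set.range f) :
    SurjCospanHalf I J where
  n := Nat.card (Set.range f)
  p := Finite.equivFin _ ∘ Set.rangeFactorization f
  q := Finite.equivFin _ ∘ Set.inclusion hfg ∘ Set.rangeFactorization g
  hp := (Finite.equivFin _).surjective.comp Set.rangeFactorization_surjective

noncomputable def ofRangeVal (f : I → A) (g : J → A) (hfg : Set.range g ⊆ Set.range f) :
    Fin (ofRange f g hfg).n → A :=
  Subtype.val ∘ (Finite.equivFin (Set.range f)).symm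

lemma ofRangeVal_comp_p (f : I → A) (g : J → A) (hfg : Set.range g ⊆ Set.range f) :
    ofRangeVal f g hfg ∘ (ofRange f g hfg).p = f :=
  funext fun _ => congr_arg Subtype.val (Equiv.symm_apply_apply _ _)

lemma ofRangeVal_comp_q (f : I → A) (g : J → A) (hfg : Set.range g ⊆ Set.range f) :
    ofRangeVal f g hfg ∘ (ofRange f g hfg).q = g :=
  funext fun _ => congr_arg Subtype.val (Equiv.symm_apply_apply _ _)

noncomputable def toOfRange (X : SurjCospanHalf I J) (h : Fin X.n → A) :
    X ⟶ ofRange (h ∘ X.p) (h ∘ X.q) (X.range_comp_q_subset h) :=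
  ⟨fun k => Finite.equivFin _ ⟨h k, X.apply_mem_range_comp_p h k⟩, rfl, rfl⟩

lemma ofRangeVal_comp_toOfRange (X : SurjCospanHalf I J) (h : Fin X.n → A) :
    ofRangeVal _ _ _ ∘ (X.toOfRange h).1 = h :=
  funext fun _ => congr_arg Subtype.val (Equiv.symm_apply_apply _ _)

end SurjCospanHalf

open SurjCospanHalf

variable {A I J : Type}

lemma colimit_ι_eq_ι_ofRange [Finite I] (X : SurjCospanHalf I J) (h : Fin X.n → A) :
    colimit.ι (halfCospanPow A I J) (op X) h =
      colimit.ι (halfCospanPow A I J) (op (ofRange _ _ (X.range_comp_q_subset h)))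
        (ofRangeVal _ _ _) :=
  (congr_arg (colimit.ι (halfCospanPow A I J) (op X)) (X.ofRangeVal_comp_toOfRange h).symm).trans
    (colimit.w_apply (halfCospanPow A I J) (X.toOfRange h).op (ofRangeVal _ _ _))

def pairCocone (A I J : Type) : Cocone (halfCospanPow A I J) where
  pt := { fg : (I → A) × (J → A) // Set.range fg.2 ⊆ Set.range fg.1 }
  ι.app X := TypeCat.ofHom fun h => ⟨(h ∘ X.unop.p, h ∘ X.unop.q), X.unop.range_comp_q_subset h⟩
  ι.naturality X Y r := by
    ext h
    exact Subtype.ext (Prod.ext (congr_arg (h ∘ ·) r.unop.2.1) (congr_arg (h ∘ ·) r.unop.2.2))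

noncomputable def colimitMkOfPair [Finite I] (s : (pairCocone A I J).pt) :
    colimit (halfCospanPow A I J) :=
  colimit.ι (halfCospanPow A I J) (op (ofRange s.1.1 s.1.2 s.2)) (ofRangeVal _ _ _)

lemma colimitDesc_pairCocone_ι (X : SurjCospanHalf I J) (h : Fin X.n → A) :
    colimit.desc (halfCospanPow A I J) (pairCocone A I J)
        (colimit.ι (halfCospanPow A I J) (op X) h) =
      ⟨(h ∘ X.p, h ∘ X.q), X.range_comp_q_subset h⟩ :=
  colimit.ι_desc_apply (pairCocone A I J) (op X) h

lemma bijective_colimitDesc_pairCocone [Finite I] :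
    Function.Bijective (colimit.desc (halfCospanPow A I J) (pairCocone A I J)) := by
  refine Function.bijective_iff_has_inverse.mpr
    ⟨colimitMkOfPair, fun x => ?_, fun ⟨⟨f, g⟩, hfg⟩ => ?_⟩
  · obtain ⟨⟨X⟩, (h : Fin X.n → A), rfl⟩ := Types.jointly_surjective' x
    rw [colimitDesc_pairCocone_ι]
    exact (colimit_ι_eq_ι_ofRange X h).symm
  · exact (colimitDesc_pairCocone_ι _ _).trans
      (Subtype.ext (Prod.ext (ofRangeVal_comp_p f g hfg) (ofRangeVal_comp_q f g hfg)))

theorem stmt8_general (A I J : Type) [Fintype I] :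
    ∃ e : colimit (halfCospanPow A I J) ≃
        { fg : (I → A) × (J → A) // Set.range fg.2 ⊆ Set.range fg.1 },
      ∀ (X : SurjCospanHalf I J) (h : Fin X.n → A),
        (e (colimit.ι (halfCospanPow A I J) (op X) h)).1 = (h ∘ X.p, h ∘ X.q) :=
  ⟨Equiv.ofBijective _ bijective_colimitDesc_pairCocone,
    fun X h => congr_arg Subtype.val (colimitDesc_pairCocone_ι X h)⟩

/-- The colimit over `𝒟ᵒᵖ` of the powers `(K,p,q) ↦ (K → A)` is canonically bijective to
the set of pairs `(f : I → A, g : J → A)` with the image of `g` contained in the image of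
`f`, via `h ↦ (h ∘ p, h ∘ q)`. -/
theorem stmt8 (A I J : Type) [Fintype I] [Nonempty I] [Fintype J] [Nonempty J] :
    ∃ e : colimit (halfCospanPow A I J) ≃
        { fg : (I → A) × (J → A) // Set.range fg.2 ⊆ Set.range fg.1 },
      ∀ (X : SurjCospanHalf I J) (h : Fin X.n → A),
        (e (colimit.ι (halfCospanPow A I J) (op X) h)).1 = (h ∘ X.p, h ∘ X.q) :=
  stmt8_general A I J
end

section
/- Let F : C ⥤ D be a final functor. Let Φ, Ψ : D ⥤ E be functors, and assume that Ψ sends every morphism of D to an isomorphism of E. Then precomposition with F gives a bijection from the set of natural transformations Φ ⟶ Ψ to the set of natural transformations F ⋙ Φ ⟶ F ⋙ Ψ. -/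
open CategoryTheory

universe v₁ v₂ v₃ u₁ u₂ u₃

/-!
Since `Ψ` inverts every morphism, naturality of `η : Φ ⟶ Ψ` along any `k : d ⟶ F c` gives
`η_d = Φ k ≫ η_{F c} ≫ (Ψ k)⁻¹`, so `η` is determined by its whiskering. Conversely, for
`η' : F ⋙ Φ ⟶ F ⋙ Ψ` the expression `Φ k ≫ η'_c ≫ (Ψ k)⁻¹` is invariant under morphisms of
`StructuredArrow d F`; this category is connected because `F` is final, so the expression
does not depend on `k` and defines the unique extension of `η'`.
-/

namespace CategoryTheory

variable {C : Type u₁} [Category.{v₁} C] {D : Type u₂} [Category.{v₂} D]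
  {E : Type u₃} [Category.{v₃} E] {Φ Ψ : D ⥤ E} [∀ {d d' : D} (f : d ⟶ d'), IsIso (Ψ.map f)]

lemma NatTrans.app_eq_map_comp_app_comp_inv (η : Φ ⟶ Ψ) {d d' : D} (k : d ⟶ d') :
    η.app d = Φ.map k ≫ η.app d' ≫ inv (Ψ.map k) := by
  simp [reassoc_of% η.naturality k]

namespace Functor.Final

variable (F : C ⥤ D)

noncomputable def transportApp (η' : F ⋙ Φ ⟶ F ⋙ Ψ) {d : D} (f : StructuredArrow d F) :
    Φ.obj d ⟶ Ψ.obj d :=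
  Φ.map f.hom ≫ η'.app f.right ≫ CategoryTheory.inv (Ψ.map f.hom)

lemma transportApp_eq_of_hom (η' : F ⋙ Φ ⟶ F ⋙ Ψ) {d : D} {f f' : StructuredArrow d F}
    (g : f ⟶ f') : transportApp F η' f = transportApp F η' f' := by
  have hη' : Φ.map (F.map g.right) ≫ η'.app f'.right = η'.app f.right ≫ Ψ.map (F.map g.right) :=
    η'.naturality g.right
  rw [transportApp, transportApp, ← cancel_mono (Ψ.map f'.hom)]
  simp only [Category.assoc, IsIso.inv_hom_id, Category.comp_id]
  rw [← StructuredArrow.w g, Functor.map_comp, Functor.map_comp, IsIso.inv_hom_id_assoc,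
    Category.assoc, hη']

lemma transportApp_eq [F.Final] (η' : F ⋙ Φ ⟶ F ⋙ Ψ) {d : D} (f f' : StructuredArrow d F) :
    transportApp F η' f = transportApp F η' f' :=
  constant_of_preserves_morphisms _ (fun _ _ g => transportApp_eq_of_hom F η' g) f f'

@[simps]
noncomputable def extendNatTrans [F.Final] (η' : F ⋙ Φ ⟶ F ⋙ Ψ) : Φ ⟶ Ψ where
  app d := transportApp F η' (StructuredArrow.mk (homToLift F d))
  naturality d d' g := by
    rw [transportApp_eq F η' _ (StructuredArrow.mk (g ≫ homToLift F d'))]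
    simp [transportApp]

lemma whiskerLeft_extendNatTrans [F.Final] (η' : F ⋙ Φ ⟶ F ⋙ Ψ) :
    whiskerLeft F (extendNatTrans F η') = η' := by
  ext c
  simpa [transportApp] using transportApp_eq F η' (StructuredArrow.mk (homToLift F (F.obj c)))
    (StructuredArrow.mk (𝟙 (F.obj c)))

lemma extendNatTrans_whiskerLeft [F.Final] (η : Φ ⟶ Ψ) :
    extendNatTrans F (whiskerLeft F η) = η := by
  ext d
  simp [transportApp, ← η.app_eq_map_comp_app_comp_inv (homToLift F d)]

noncomputable def whiskerLeftEquiv [F.Final] : (Φ ⟶ Ψ) ≃ (F ⋙ Φ ⟶ F ⋙ Ψ) where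
  toFun := whiskerLeft F
  invFun := extendNatTrans F
  left_inv := extendNatTrans_whiskerLeft F
  right_inv := whiskerLeft_extendNatTrans F

end Functor.Final

end CategoryTheory

/-- If `F : C ⥤ D` is final and `Ψ : D ⥤ E` sends every morphism of `D` to an
isomorphism, then precomposition with `F` is a bijection from natural transformations
`Φ ⟶ Ψ` to natural transformations `F ⋙ Φ ⟶ F ⋙ Ψ`. -/
theorem stmt9 {C : Type u₁} [Category.{v₁} C] {D : Type u₂} [Category.{v₂} D]
    {E : Type u₃} [Category.{v₃} E] (F : C ⥤ D) [F.Final] (Φ Ψ : D ⥤ E)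
    (hΨ : ∀ {d d' : D} (f : d ⟶ d'), IsIso (Ψ.map f)) :
    Function.Bijective fun η : Φ ⟶ Ψ => Functor.whiskerLeft F η :=
  (Functor.Final.whiskerLeftEquiv (Φ := Φ) (Ψ := Ψ) F).bijective
end

section
/- Let D be a category, G : D ⥤ Cat a functor, and P : Grothendieck G ⥤ D the projection of the Grothendieck construction. Fix an object d of D. Then the functor G(d) ⥤ CostructuredArrow P d sending an object x of G(d) to the pair ((d, x), 𝟙_d), and a morphism φ of G(d) to the evident morphism lying over 𝟙_d, is a final functor. Consequently the pointwise left Kan extension along P of any functor Φ : Grothendieck G ⥤ E, evaluated at d, is computed by the colimit over the fiber G(d) of the restriction of Φ, whenever that colimit exists. -/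
open CategoryTheory Limits

universe v₂ u₂ v u v₃ u₃

/-- The inclusion of the fiber `G(d)` into the comma category `CostructuredArrow P d`
of the projection `P : Grothendieck G ⥤ D`, sending `x` to `((d, x), 𝟙 d)`. -/
def fiberIncl {D : Type u} [Category.{v} D] (G : D ⥤ Cat.{v₂, u₂}) (d : D) :
    ↥(G.obj d) ⥤ CostructuredArrow (Grothendieck.forget G) d where
  obj x := CostructuredArrow.mk (Y := (Grothendieck.ι G d).obj x) (𝟙 d)
  map φ := CostructuredArrow.homMk ((Grothendieck.ι G d).map φ)
    (by first | exact Category.id_comp _ | (simp [Grothendieck.forget]; exact Category.id_comp _))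
  map_id x := by
    apply CostructuredArrow.hom_ext
    simp only [CostructuredArrow.homMk_left, CostructuredArrow.id_left,
      CostructuredArrow.mk_left]
    exact (Grothendieck.ι G d).map_id x
  map_comp f g := by
    apply CostructuredArrow.hom_ext
    simp only [CostructuredArrow.homMk_left, Functor.map_comp, CostructuredArrow.comp_left]
    rfl

lemma fiberIncl_final {D : Type u} [Category.{v} D] (G : D ⥤ Cat.{v₂, u₂}) (d : D) :
    (fiberIncl G d).Final := by
  constructor
  intro K
  have hb : ∀ j : StructuredArrow K (fiberIncl G d), j.hom.left.base = K.hom := by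
    intro j
    have := CostructuredArrow.w j.hom
    simp [fiberIncl] at this
    exact (Category.comp_id _).symm.trans this
  let j₀ : StructuredArrow K (fiberIncl G d) :=
    StructuredArrow.mk (Y := (G.map K.hom).toFunctor.obj K.left.fiber)
      (CostructuredArrow.homMk ⟨K.hom, 𝟙 _⟩ (by simp [fiberIncl]; exact Category.comp_id _))
  have key : ∀ j : StructuredArrow K (fiberIncl G d), Nonempty (j₀ ⟶ j) := by
    intro j
    refine ⟨StructuredArrow.homMk ((eqToHom (congrArg (fun f => (G.map f).toFunctor.obj K.left.fiber) (hb j).symm) : (G.map K.hom).toFunctor.obj K.left.fiber ⟶ (G.map j.hom.left.base).toFunctor.obj K.left.fiber) ≫ j.hom.left.fiber) ?_⟩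
    apply CostructuredArrow.hom_ext
    apply Grothendieck.ext
    · simp [j₀, Grothendieck.comp_fiber, fiberIncl, eqToHom_map]
      dsimp [CostructuredArrow.homMk, Grothendieck.ι]
      erw [CategoryTheory.Functor.map_id (G.map (𝟙 d)).toFunctor]
      erw [Category.id_comp]
      erw [eqToHom_trans_assoc, eqToHom_trans_assoc, eqToHom_trans_assoc, eqToHom_refl, Category.id_comp]
    · simp [j₀, fiberIncl, hb j]
      exact Category.comp_id K.hom
  have : Nonempty (StructuredArrow K (fiberIncl G d)) := ⟨j₀⟩
  apply zigzag_isConnected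
  intro j₁ j₂
  exact Relation.ReflTransGen.trans
    (Relation.ReflTransGen.single (Or.inr (key j₁)))
    (Relation.ReflTransGen.single (Or.inl (key j₂)))

/-- The inclusion of the fiber `G(d)` into `CostructuredArrow P d` is final; consequently
the pointwise left Kan extension along `P` of any `Φ : Grothendieck G ⥤ E` at `d` —
i.e. the colimit over `CostructuredArrow P d` of `proj ⋙ Φ` — is computed by the colimit
over the fiber `G(d)` of the restriction of `Φ`, whenever that colimit exists. -/
theorem stmt10 {D : Type u} [Category.{v} D] (G : D ⥤ Cat.{v₂, u₂}) (d : D) :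
    (fiberIncl G d).Final ∧
      ∀ {E : Type u₃} [Category.{v₃} E] (Φ : Grothendieck G ⥤ E)
        (h : HasColimit
          (fiberIncl G d ⋙ CostructuredArrow.proj (Grothendieck.forget G) d ⋙ Φ)),
        ∃ h' : HasColimit (CostructuredArrow.proj (Grothendieck.forget G) d ⋙ Φ),
          Nonempty
            ((@colimit _ _ _ _
              (fiberIncl G d ⋙ CostructuredArrow.proj (Grothendieck.forget G) d ⋙ Φ) h) ≅
             (@colimit _ _ _ _ (CostructuredArrow.proj (Grothendieck.forget G) d ⋙ Φ) h')) := by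
  have hf := fiberIncl_final G d
  refine ⟨hf, ?_⟩
  intro E _ Φ h
  haveI := hf
  haveI := h
  haveI h' : HasColimit (CostructuredArrow.proj (Grothendieck.forget G) d ⋙ Φ) :=
    Functor.Final.hasColimit_of_comp (fiberIncl G d)
  exact ⟨h', ⟨Functor.Final.colimitIso (fiberIncl G d) _⟩⟩
end
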